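/- Let γ, ι, τ be finite types, let p : γ × ι → ℝ satisfy 0 ≤ p (g, i) for all (g, i), and fix β with 0 < β < 1; set λ := β / (1 − β). For an encoder f : γ → τ define pG g := ∑_i p (g, i), qI i := ∑_g p (g, i), r_f (t, i) := ∑_{g : f g = t} p (g, i), qT_f t := ∑_i r_f (t, i), s_f (g, t) := (if f g = t then pG g else 0), and the quantities I_f(G; T) := ∑_{g, t} s_f (g, t) · log (s_f (g, t) / (pG g · qT_f t)), H_f(T) := −∑_t qT_f t · log (qT_f t), I_f(T; G_I) := ∑_{t, i} r_f (t, i) · log (r_f (t, i) / (qT_f t · qI i)), and H_f(T | G_I) := −∑_{t, i} r_f (t, i) · log (r_f (t, i) / qI i). Then for any set S of functions from γ to τ and any f₀ ∈ S, f₀ minimizes the information-bottleneck objective f ↦ I_f(G; T) − β · I_f(T; G_I) over S if and only if f₀ minimizes f ↦ H_f(T) + λ · H_f(T | G_I) over S. -/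
import Mathlib


/-- Proposition 2: with `λ = β/(1−β)`, `0 < β < 1`, a deterministic encoder `f₀ ∈ S` minimizes
the information-bottleneck objective `I(G;T) − β·I(T;G_I)` over `S` iff it minimizes
`H(T) + λ·H(T | G_I)` over `S`. -/
theorem stmt_8 {γ ι τ : Type*} [Fintype γ] [Fintype ι] [Fintype τ] [DecidableEq τ]
    (p : γ × ι → ℝ) (hp : ∀ g i, 0 ≤ p (g, i))
    (β lam : ℝ) (hβ0 : 0 < β) (hβ1 : β < 1) (hlam : lam = β / (1 - β))
    (pG : γ → ℝ) (hpG : ∀ g, pG g = ∑ i, p (g, i))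
    (qI : ι → ℝ) (hqI : ∀ i, qI i = ∑ g, p (g, i))
    (r : (γ → τ) → τ × ι → ℝ)
    (hr : ∀ f t i, r f (t, i) = ∑ g, if f g = t then p (g, i) else 0)
    (qT : (γ → τ) → τ → ℝ) (hqT : ∀ f t, qT f t = ∑ i, r f (t, i))
    (s : (γ → τ) → γ × τ → ℝ) (hs : ∀ f g t, s f (g, t) = if f g = t then pG g else 0)
    (IGT : (γ → τ) → ℝ)
    (hIGT : ∀ f, IGT f = ∑ g, ∑ t, s f (g, t) * Real.log (s f (g, t) / (pG g * qT f t)))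
    (HT : (γ → τ) → ℝ) (hHT : ∀ f, HT f = -∑ t, qT f t * Real.log (qT f t))
    (ITG : (γ → τ) → ℝ)
    (hITG : ∀ f, ITG f = ∑ t, ∑ i, r f (t, i) * Real.log (r f (t, i) / (qT f t * qI i)))
    (HTG : (γ → τ) → ℝ)
    (hHTG : ∀ f, HTG f = -∑ t, ∑ i, r f (t, i) * Real.log (r f (t, i) / qI i))
    (S : Set (γ → τ)) (f₀ : γ → τ) (hf₀ : f₀ ∈ S) :
    (∀ f ∈ S, IGT f₀ - β * ITG f₀ ≤ IGT f - β * ITG f) ↔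
      (∀ f ∈ S, HT f₀ + lam * HTG f₀ ≤ HT f + lam * HTG f) := by
  have h1β : (0:ℝ) < 1 - β := by linarith
  have hpG0 : ∀ g, 0 ≤ pG g := fun g => by
    rw [hpG]; exact Finset.sum_nonneg fun i _ => hp g i
  have hr0 : ∀ f t i, 0 ≤ r f (t, i) := fun f t i => by
    rw [hr]
    exact Finset.sum_nonneg fun g _ => by by_cases h : f g = t <;> simp [h, hp g i]
  have hrleqT : ∀ f t i, r f (t, i) ≤ qT f t := fun f t i => by
    rw [hqT]
    exact Finset.single_le_sum (fun j _ => hr0 f t j) (Finset.mem_univ i)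
  have hrleqI : ∀ f t i, r f (t, i) ≤ qI i := fun f t i => by
    rw [hr, hqI]
    refine Finset.sum_le_sum fun g _ => ?_
    by_cases h : f g = t <;> simp [h, hp g i]
  have hpGleqT : ∀ (f : γ → τ) g, pG g ≤ qT f (f g) := fun f g => by
    rw [hpG, hqT]
    refine Finset.sum_le_sum fun i _ => ?_
    rw [hr]
    have h1 : p (g, i) = if f g = f g then p (g, i) else 0 := by simp
    rw [h1]
    exact Finset.single_le_sum (f := fun g' => if f g' = f g then p (g', i) else 0)
      (fun g' _ => by by_cases h : f g' = f g <;> simp [h, hp g' i]) (Finset.mem_univ g)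
  have hqTalt : ∀ (f : γ → τ) t, qT f t = ∑ g, if f g = t then pG g else 0 := by
    intro f t
    rw [hqT]
    simp only [hr]
    rw [Finset.sum_comm]
    refine Finset.sum_congr rfl fun g _ => ?_
    rw [hpG]
    by_cases h : f g = t <;> simp [h]
  have hIGTeq : ∀ f, IGT f = -∑ t, qT f t * Real.log (qT f t) := by
    intro f
    rw [hIGT]
    have step1 : ∀ g, ∑ t, s f (g, t) * Real.log (s f (g, t) / (pG g * qT f t))
        = -(pG g * Real.log (qT f (f g))) := by
      intro g
      rw [Finset.sum_eq_single (f g)]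
      · rw [hs, if_pos rfl]
        rcases eq_or_lt_of_le (hpG0 g) with h0 | h0
        · simp [← h0]
        · have hqTpos : 0 < qT f (f g) := lt_of_lt_of_le h0 (hpGleqT f g)
          have hd : pG g / (pG g * qT f (f g)) = (qT f (f g))⁻¹ := by
            field_simp
          rw [hd, Real.log_inv]; ring
      · intro t _ ht
        rw [hs, if_neg (fun h => ht h.symm)]
        simp
      · simp
    rw [Finset.sum_congr rfl fun g _ => step1 g, Finset.sum_neg_distrib, neg_inj]
    have regroup : ∀ t, qT f t * Real.log (qT f t)
        = ∑ g, if f g = t then pG g * Real.log (qT f t) else 0 := by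
      intro t
      rw [hqTalt f t, Finset.sum_mul]
      refine Finset.sum_congr rfl fun g _ => ?_
      by_cases h : f g = t <;> simp [h]
    rw [Finset.sum_congr rfl fun t (_ : t ∈ Finset.univ) => regroup t, Finset.sum_comm]
    refine Finset.sum_congr rfl fun g _ => ?_
    rw [Finset.sum_ite_eq]
    simp
  have hITGeq : ∀ f, ITG f = -HTG f - ∑ t, qT f t * Real.log (qT f t) := by
    intro f
    rw [hITG, hHTG, neg_neg]
    have step : ∀ t i, r f (t, i) * Real.log (r f (t, i) / (qT f t * qI i))
        = r f (t, i) * Real.log (r f (t, i) / qI i) - r f (t, i) * Real.log (qT f t) := by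
      intro t i
      rcases eq_or_lt_of_le (hr0 f t i) with h0 | h0
      · simp [← h0]
      · have hqTp : 0 < qT f t := lt_of_lt_of_le h0 (hrleqT f t i)
        have hqIp : 0 < qI i := lt_of_lt_of_le h0 (hrleqI f t i)
        have hd : r f (t, i) / (qT f t * qI i) = (r f (t, i) / qI i) / qT f t := by
          rw [div_div, mul_comm (qI i) (qT f t)]
        rw [hd, Real.log_div (by positivity) (ne_of_gt hqTp)]
        ring
    simp only [step, Finset.sum_sub_distrib]
    congr 1
    refine Finset.sum_congr rfl fun t _ => ?_
    rw [← Finset.sum_mul, ← hqT]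
  have hscale : (1 - β) * lam = β := by
    rw [hlam]; field_simp
  have key : ∀ f, IGT f - β * ITG f = (1 - β) * (HT f + lam * HTG f) := by
    intro f
    rw [hIGTeq f, hITGeq f, hHT f]
    linear_combination (-HTG f) * hscale
  constructor <;> intro h f hf
  · have h2 : (1 - β) * (HT f₀ + lam * HTG f₀) ≤ (1 - β) * (HT f + lam * HTG f) := by
      rw [← key f₀, ← key f]; exact h f hf
    exact le_of_mul_le_mul_left h2 h1β
  · rw [key f₀, key f]
    exact mul_le_mul_of_nonneg_left (h f hf) (le_of_lt h1β)
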